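/- arXiv:1301.4667 — 8 statements merged into one kernel-verified Lean document; each statement's English description precedes it below -/
import Mathlib

section
/- Let E be a real inner product space and let g, b ∈ E be orthonormal vectors. Fix θ ∈ ℝ and set ψ = sin(θ)·g + cos(θ)·b. Let R₁ : E → E be the linear map x ↦ x − 2⟨g, x⟩·g (sign flip of the g-component) and let R₂ : E → E be the linear map x ↦ 2⟨ψ, x⟩·ψ − x (reflection through the line spanned by ψ). Then for every α ∈ ℝ, (R₂ ∘ R₁)(sin(α)·g + cos(α)·b) = sin(α + 2θ)·g + cos(α + 2θ)·b; that is, one Grover iteration acts on the plane spanned by g and b as a rotation by angle 2θ. -/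
/-! In the orthonormal frame `(g, b)`, write unit vectors of the plane as `sin t • g + cos t • b`.
The oracle `R₁` reflects the angle, `t ↦ -t`, and `R₂` reflects it in the line at angle `θ`,
`t ↦ 2θ - t` (because `⟪ψ, x⟫ = cos (θ - t)` and a product-to-sum identity). Their composite is
`t ↦ 2θ - (-t) = t + 2θ`. -/

open Real
open scoped RealInnerProductSpace

namespace Grover

variable {E : Type*} [NormedAddCommGroup E] [InnerProductSpace ℝ E]

noncomputable def circlePoint (g b : E) (t : ℝ) : E := sin t • g + cos t • b

variable {g b : E}

theorem inner_left_circlePoint (hg : ‖g‖ = 1) (hgb : ⟪g, b⟫ = 0) (t : ℝ) :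
    ⟪g, circlePoint g b t⟫ = sin t := by
  simp [circlePoint, inner_add_right, inner_smul_right, hg, hgb]

theorem inner_circlePoint_circlePoint (hg : ‖g‖ = 1) (hb : ‖b‖ = 1) (hgb : ⟪g, b⟫ = 0)
    (s t : ℝ) : ⟪circlePoint g b s, circlePoint g b t⟫ = cos (s - t) := by
  have hbg : ⟪b, g⟫ = 0 := by rwa [real_inner_comm]
  simp only [circlePoint, inner_add_left, inner_add_right, real_inner_smul_left,
    real_inner_smul_right, real_inner_self_eq_norm_sq, hg, hb, hgb, hbg, cos_sub]
  ring

theorem circlePoint_sub_two_inner_smul (hg : ‖g‖ = 1) (hgb : ⟪g, b⟫ = 0) (t : ℝ) :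
    circlePoint g b t - (2 * ⟪g, circlePoint g b t⟫) • g = circlePoint g b (-t) := by
  rw [inner_left_circlePoint hg hgb, circlePoint, circlePoint, sin_neg, cos_neg]
  module

theorem two_inner_smul_sub_circlePoint (hg : ‖g‖ = 1) (hb : ‖b‖ = 1) (hgb : ⟪g, b⟫ = 0)
    (s t : ℝ) :
    (2 * ⟪circlePoint g b s, circlePoint g b t⟫) • circlePoint g b s - circlePoint g b t =
      circlePoint g b (2 * s - t) := by
  rw [inner_circlePoint_circlePoint hg hb hgb]
  have hsin : sin (2 * s - t) = 2 * cos (s - t) * sin s - sin t := by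
    rw [sin_sub, cos_sub, sin_two_mul, cos_two_mul]
    linear_combination (-2 * sin t) * sin_sq_add_cos_sq s
  have hcos : cos (2 * s - t) = 2 * cos (s - t) * cos s - cos t := by
    rw [cos_sub, cos_sub, sin_two_mul, cos_two_mul]
    ring
  simp only [circlePoint, hsin, hcos]
  module

end Grover

open Grover in
/-- One Grover iteration (oracle reflection followed by reflection through the
line spanned by `ψ = sin θ • g + cos θ • b`) acts on the plane spanned by the
orthonormal vectors `g` and `b` as a rotation by angle `2θ`. -/
theorem grover_iteration_is_rotation
    {E : Type*} [NormedAddCommGroup E] [InnerProductSpace ℝ E]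
    (g b : E) (hg : ‖g‖ = 1) (hb : ‖b‖ = 1) (hgb : (inner ℝ g b : ℝ) = 0)
    (θ : ℝ) (ψ : E) (hψ : ψ = Real.sin θ • g + Real.cos θ • b)
    (R₁ R₂ : E →ₗ[ℝ] E)
    (hR₁ : ∀ x, R₁ x = x - (2 * (inner ℝ g x : ℝ)) • g)
    (hR₂ : ∀ x, R₂ x = (2 * (inner ℝ ψ x : ℝ)) • ψ - x) :
    ∀ α : ℝ, (R₂ ∘ R₁) (Real.sin α • g + Real.cos α • b) =
      Real.sin (α + 2 * θ) • g + Real.cos (α + 2 * θ) • b := by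
  intro α
  change R₂ (R₁ (circlePoint g b α)) = circlePoint g b (α + 2 * θ)
  rw [hR₁, circlePoint_sub_two_inner_smul hg hgb, hR₂,
    show ψ = circlePoint g b θ from hψ, two_inner_smul_sub_circlePoint hg hb hgb]
  congr 1
  ring
end

section
/- For every natural number k, the k-fold application of the Grover operator to the uniform superposition satisfies G^k u = sin((2k+1)θ)·g + cos((2k+1)θ)·b. -/
/-!
The orthonormal pair `(g, b)` spans a plane containing `u = sin θ • g + cos θ • b`. On that plane
the oracle is the reflection in the `b`-axis and the diffusion the reflection in the line through
`u`, so `G = D ∘ O` is the rotation by `2θ`, and `k` rotations carry the angle `θ` of `u` to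
`(2k + 1)θ`.
-/

open Real Finset

theorem sin_arcsin_sqrt {x : ℝ} (hx : x ≤ 1) : sin (arcsin √x) = √x :=
  sin_arcsin (by linarith [sqrt_nonneg x]) (sqrt_le_one.mpr hx)

theorem cos_arcsin_sqrt {x : ℝ} (hx : 0 ≤ x) : cos (arcsin √x) = √(1 - x) := by
  rw [cos_arcsin, sq_sqrt hx]

section EuclideanSpace

variable {ι : Type*} [Fintype ι]

theorem EuclideanSpace.norm_eq_one_of_apply_eq_ite [DecidableEq ι] {s : Finset ι}
    (hs : s.Nonempty) {v : EuclideanSpace ℝ ι}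
    (hv : ∀ i, v i = if i ∈ s then 1 / √(#s : ℝ) else 0) : ‖v‖ = 1 := by
  have hs₀ : (0 : ℝ) < #s := by exact_mod_cast hs.card_pos
  rw [EuclideanSpace.norm_eq, sqrt_eq_one]
  simp only [hv, apply_ite (‖·‖ ^ 2), norm_zero, zero_pow two_ne_zero]
  rw [Fintype.sum_ite_mem, sum_const, nsmul_eq_mul, norm_div, norm_one,
    Real.norm_of_nonneg (sqrt_nonneg _), div_pow, sq_sqrt hs₀.le]
  field_simp

theorem EuclideanSpace.inner_eq_zero_of_disjoint_support {s : Set ι}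
    {v w : EuclideanSpace ℝ ι} (hv : ∀ i ∉ s, v i = 0) (hw : ∀ i ∈ s, w i = 0) :
    inner ℝ v w = 0 := by
  rw [PiLp.inner_apply]
  refine sum_eq_zero fun i _ ↦ ?_
  by_cases hi : i ∈ s <;> simp [hv, hw, hi]

end EuclideanSpace

namespace Grover

variable {E : Type*} [NormedAddCommGroup E] [InnerProductSpace ℝ E]

/-- The point at angle `α` on the unit circle of the plane spanned by `b` (angle `0`) and
`g` (angle `π / 2`). -/
noncomputable def state (g b : E) (α : ℝ) : E := sin α • g + cos α • b

section Orthonormal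

variable {g b : E} (hg : ‖g‖ = 1) (hb : ‖b‖ = 1) (hgb : inner ℝ g b = 0)
include hg hb hgb

theorem inner_state_state (α β : ℝ) :
    inner ℝ (state g b α) (state g b β) = cos (α - β) := by
  have hbg : inner ℝ b g = (0 : ℝ) := by rw [real_inner_comm, hgb]
  simp only [state, inner_add_left, inner_add_right, real_inner_smul_left, real_inner_smul_right,
    real_inner_self_eq_norm_sq, hg, hb, hgb, hbg, cos_sub]
  ring

/-- The reflection in the line through `state g b θ` sends the angle `β` to `2θ - β`. -/
theorem reflection_state (θ β : ℝ) :
    (2 * inner ℝ (state g b θ) (state g b β)) • state g b θ - state g b β =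
      state g b (2 * θ - β) := by
  rw [inner_state_state hg hb hgb]
  have hsin : sin (2 * θ - β) = 2 * cos (θ - β) * sin θ - sin β := by
    rw [sin_sub, sin_two_mul, cos_two_mul, cos_sub]
    linear_combination -2 * sin β * sin_sq_add_cos_sq θ
  have hcos : cos (2 * θ - β) = 2 * cos (θ - β) * cos θ - cos β := by
    rw [cos_sub, sin_two_mul, cos_two_mul, cos_sub]
    ring
  simp only [state, hsin, hcos]
  module

theorem iterate_comp_state {O D : E → E} {u : E} {θ : ℝ} (hu : u = state g b θ)
    (hO : ∀ α, O (state g b α) = state g b (-α))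
    (hD : ∀ x, D x = (2 * inner ℝ u x) • u - x) (k : ℕ) (α : ℝ) :
    (D ∘ O)^[k] (state g b α) = state g b (α + k * (2 * θ)) := by
  have hrotate : Function.Semiconj (state g b) (· + 2 * θ) (D ∘ O) := fun α ↦ by
    rw [Function.comp_apply, hO, hD, hu, reflection_state hg hb hgb]
    ring_nf
  rw [← hrotate.iterate_right k α, add_right_iterate_apply, nsmul_eq_mul]

end Orthonormal

theorem oracle_apply_state {ι : Type*} [Fintype ι] [DecidableEq ι] {M : Finset ι}
    {O : EuclideanSpace ℝ ι → EuclideanSpace ℝ ι}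
    (hO : ∀ x i, O x i = if i ∈ M then -x i else x i) {g b : EuclideanSpace ℝ ι}
    (hg : ∀ i ∉ M, g i = 0) (hb : ∀ i ∈ M, b i = 0) (α : ℝ) :
    O (state g b α) = state g b (-α) := by
  ext i
  by_cases hi : i ∈ M <;> simp [state, hO, hi, hg, hb]

theorem uniform_eq_state {N : ℕ} {M : Finset (Fin N)} (hMN : #M < N)
    {u g b : EuclideanSpace ℝ (Fin N)} (hu : ∀ i, u i = 1 / √N)
    (hg : ∀ i, g i = if i ∈ M then 1 / √(#M) else 0)
    (hb : ∀ i, b i = if i ∈ M then 0 else 1 / √((N : ℝ) - #M)) :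
    u = state g b (arcsin √(#M / N)) := by
  have hMN' : (#M : ℝ) < N := by exact_mod_cast hMN
  have hN : (0 : ℝ) < N := by exact_mod_cast hMN.pos
  ext i
  simp only [state, PiLp.add_apply, PiLp.smul_apply, smul_eq_mul, hu, hg, hb]
  split_ifs with hi <;> simp only [mul_zero, add_zero, zero_add]
  · have hM : (0 : ℝ) < #M := by exact_mod_cast card_pos.mpr ⟨i, hi⟩
    rw [sin_arcsin_sqrt ((div_le_one hN).mpr hMN'.le), sqrt_div' _ hN.le]
    field_simp
  · rw [cos_arcsin_sqrt (by positivity), one_sub_div hN.ne', sqrt_div' _ hN.le]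
    have : 0 < √((N : ℝ) - #M) := sqrt_pos.mpr (by linarith)
    field_simp

end Grover

open Grover in
theorem grover_power_on_uniform_general
    (N : ℕ) (M : Finset (Fin N)) (hM : M.Nonempty) (hMN : M.card < N)
    (u g b : EuclideanSpace ℝ (Fin N))
    (hu : ∀ i, u i = 1 / Real.sqrt N)
    (hg : ∀ i, g i = if i ∈ M then 1 / Real.sqrt M.card else 0)
    (hb : ∀ i, b i = if i ∈ M then 0 else 1 / Real.sqrt ((N : ℝ) - M.card))
    (θ : ℝ) (hθ : θ = Real.arcsin (Real.sqrt (M.card / N)))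
    (O D : EuclideanSpace ℝ (Fin N) →ₗ[ℝ] EuclideanSpace ℝ (Fin N))
    (hO : ∀ x, ∀ i, O x i = if i ∈ M then -x i else x i)
    (hD : ∀ x, D x = (2 * (inner ℝ u x : ℝ)) • u - x) :
    ∀ k : ℕ, (⇑D ∘ ⇑O)^[k] u =
      Real.sin ((2 * k + 1) * θ) • g + Real.cos ((2 * k + 1) * θ) • b := by
  intro k
  have hcard_compl : #Mᶜ = N - #M := by rw [card_compl, Fintype.card_fin]
  have hb_compl : ∀ i, b i = if i ∈ Mᶜ then 1 / √(#Mᶜ : ℝ) else 0 := fun i ↦ by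
    simp only [hb, hcard_compl, Nat.cast_sub hMN.le, mem_compl, ite_not]
  have hg_norm : ‖g‖ = 1 := EuclideanSpace.norm_eq_one_of_apply_eq_ite hM hg
  have hb_norm : ‖b‖ = 1 :=
    EuclideanSpace.norm_eq_one_of_apply_eq_ite (card_pos.mp (by omega)) hb_compl
  have hg_supp : ∀ i ∉ M, g i = 0 := fun i hi ↦ by simp [hg, hi]
  have hb_supp : ∀ i ∈ M, b i = 0 := fun i hi ↦ by simp [hb, hi]
  have hu_state : u = state g b θ := hθ ▸ uniform_eq_state hMN hu hg hb
  rw [hu_state, iterate_comp_state hg_norm hb_norm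
    (EuclideanSpace.inner_eq_zero_of_disjoint_support hg_supp hb_supp) hu_state
    (oracle_apply_state hO hg_supp hb_supp) hD, show θ + k * (2 * θ) = (2 * k + 1) * θ by ring]
  rfl

/-- The `k`-fold application of the Grover operator `G = D ∘ O` to the uniform
superposition satisfies `G^k u = sin((2k+1)θ) • g + cos((2k+1)θ) • b`. -/
theorem grover_power_on_uniform
    (N : ℕ) (hN : 0 < N) (M : Finset (Fin N)) (hM : M.Nonempty) (hMN : M.card < N)
    (u g b : EuclideanSpace ℝ (Fin N))
    (hu : ∀ i, u i = 1 / Real.sqrt N)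
    (hg : ∀ i, g i = if i ∈ M then 1 / Real.sqrt M.card else 0)
    (hb : ∀ i, b i = if i ∈ M then 0 else 1 / Real.sqrt ((N : ℝ) - M.card))
    (θ : ℝ) (hθ : θ = Real.arcsin (Real.sqrt (M.card / N)))
    (O D : EuclideanSpace ℝ (Fin N) →ₗ[ℝ] EuclideanSpace ℝ (Fin N))
    (hO : ∀ x, ∀ i, O x i = if i ∈ M then -x i else x i)
    (hD : ∀ x, D x = (2 * (inner ℝ u x : ℝ)) • u - x) :
    ∀ k : ℕ, (⇑D ∘ ⇑O)^[k] u =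
      Real.sin ((2 * k + 1) * θ) • g + Real.cos ((2 * k + 1) * θ) • b :=
  grover_power_on_uniform_general N M hM hMN u g b hu hg hb θ hθ O D hO hD
end

section
/- For every natural number k, the probability that a measurement of the state G^k u yields a marked element equals sin²((2k+1)θ); that is, ∑_{i ∈ M} ((G^k u)_i)² = sin²((2k+1)θ). -/
/-!
Let `w` and `r` be the normalized indicator vectors of the marked set `M` and of its
complement. They are orthonormal and `u = sin θ • w + cos θ • r`. On their span the oracle is
the reflection in the line of `r` and the diffusion is the reflection in the line of `u`. The
two lines meet at angle `θ`, so `D ∘ O` rotates the plane by `2θ`. Hence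
`(D ∘ O)^[k] u = sin ((2k+1)θ) • w + cos ((2k+1)θ) • r`, and the squared amplitudes on `M` add
up to `sin² ((2k+1)θ)`.
-/

open Real Finset

namespace Grover

theorem sin_add_two_mul (φ θ : ℝ) : sin (φ + 2 * θ) = sin φ + 2 * cos (φ + θ) * sin θ := by
  rw [sin_add, cos_add, sin_two_mul, cos_two_mul, cos_sq']
  ring

theorem cos_add_two_mul (φ θ : ℝ) : cos (φ + 2 * θ) = 2 * cos (φ + θ) * cos θ - cos φ := by
  rw [cos_add, cos_add, sin_two_mul, cos_two_mul]
  ring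

section Rotation

variable {E : Type*} [NormedAddCommGroup E] [InnerProductSpace ℝ E]
  {w r u : E} {θ : ℝ} {O : E →ₗ[ℝ] E} {D : E → E}

theorem diffusion_oracle_apply_sin_smul_add_cos_smul (hw : ‖w‖ = 1) (hr : ‖r‖ = 1)
    (hwr : inner ℝ w r = 0) (hu : u = sin θ • w + cos θ • r) (hOw : O w = -w) (hOr : O r = r)
    (hD : ∀ x, D x = (2 * inner ℝ u x) • u - x) (φ : ℝ) :
    D (O (sin φ • w + cos φ • r)) = sin (φ + 2 * θ) • w + cos (φ + 2 * θ) • r := by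
  have hOx : O (sin φ • w + cos φ • r) = -sin φ • w + cos φ • r := by
    rw [map_add, map_smul, map_smul, hOw, hOr, smul_neg, neg_smul]
  have hinner : inner ℝ u (-sin φ • w + cos φ • r) = cos (φ + θ) := by
    simp only [hu, inner_add_left, inner_add_right, real_inner_smul_left, real_inner_smul_right,
      real_inner_self_eq_norm_sq, hw, hr, hwr, real_inner_comm w r, cos_add]
    ring
  rw [hD, hOx, hinner, hu, sin_add_two_mul, cos_add_two_mul]
  module

theorem iterate_diffusion_oracle_apply (hw : ‖w‖ = 1) (hr : ‖r‖ = 1)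
    (hwr : inner ℝ w r = 0) (hu : u = sin θ • w + cos θ • r) (hOw : O w = -w) (hOr : O r = r)
    (hD : ∀ x, D x = (2 * inner ℝ u x) • u - x) (k : ℕ) :
    (D ∘ O)^[k] u = sin ((2 * k + 1) * θ) • w + cos ((2 * k + 1) * θ) • r := by
  induction k with
  | zero => simp [hu]
  | succ k ih =>
    rw [Function.iterate_succ_apply', ih, Function.comp_apply,
      diffusion_oracle_apply_sin_smul_add_cos_smul hw hr hwr hu hOw hOr hD]
    push_cast
    ring_nf

end Rotation

section Angle

variable {ι : Type*} [Fintype ι]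

theorem sin_arcsin_sqrt_card_div (M : Finset ι) :
    sin (arcsin √(#M / Fintype.card ι)) = √(#M : ℝ) / √(Fintype.card ι : ℝ) := by
  have hle : (#M : ℝ) ≤ Fintype.card ι := by exact_mod_cast card_le_univ M
  rw [sin_arcsin (by linarith [sqrt_nonneg (#M / Fintype.card ι : ℝ)])
    (sqrt_le_one.mpr (div_le_one_of_le₀ hle (Nat.cast_nonneg _))), sqrt_div' _ (Nat.cast_nonneg _)]

theorem cos_arcsin_sqrt_card_div [DecidableEq ι] [Nonempty ι] (M : Finset ι) :
    cos (arcsin √(#M / Fintype.card ι)) = √(#Mᶜ : ℝ) / √(Fintype.card ι : ℝ) := by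
  have hcard : (Fintype.card ι : ℝ) ≠ 0 := by exact_mod_cast Fintype.card_ne_zero
  have hcompl : (#Mᶜ : ℝ) = Fintype.card ι - #M := by
    rw [card_compl, Nat.cast_sub (card_le_univ M)]
  rw [cos_arcsin, sq_sqrt (by positivity), ← sqrt_div' _ (Nat.cast_nonneg _), hcompl]
  congr 1
  field_simp

end Angle

section NormalizedIndicator

variable {ι : Type*} [DecidableEq ι]

noncomputable def normalizedIndicator (S : Finset ι) : EuclideanSpace ℝ ι :=
  WithLp.toLp 2 fun i => if i ∈ S then (√(#S : ℝ))⁻¹ else 0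

@[simp]
theorem normalizedIndicator_apply (S : Finset ι) (i : ι) :
    normalizedIndicator S i = if i ∈ S then (√(#S : ℝ))⁻¹ else 0 := rfl

theorem sum_sq_normalizedIndicator_apply {S : Finset ι} (hS : S.Nonempty) :
    ∑ i ∈ S, normalizedIndicator S i ^ 2 = 1 := by
  have : (0 : ℝ) < #S := by exact_mod_cast hS.card_pos
  rw [sum_congr rfl fun i hi => by rw [normalizedIndicator_apply, if_pos hi], sum_const,
    nsmul_eq_mul, inv_pow, sq_sqrt this.le, mul_inv_cancel₀ this.ne']

theorem apply_normalizedIndicator_eq_neg {M : Finset ι}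
    {O : EuclideanSpace ℝ ι → EuclideanSpace ℝ ι}
    (hO : ∀ x i, O x i = if i ∈ M then -x i else x i) :
    O (normalizedIndicator M) = -normalizedIndicator M := by
  ext i
  by_cases hi : i ∈ M <;> simp [hO, hi]

variable [Fintype ι]

theorem norm_normalizedIndicator {S : Finset ι} (hS : S.Nonempty) :
    ‖normalizedIndicator S‖ = 1 := by
  rw [EuclideanSpace.norm_eq, ← sum_subset (subset_univ S) fun i _ hi => by simp [hi]]
  simp only [Real.norm_eq_abs, sq_abs]
  rw [sum_sq_normalizedIndicator_apply hS, sqrt_one]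

theorem inner_normalizedIndicator_of_disjoint {S T : Finset ι} (h : Disjoint S T) :
    inner ℝ (normalizedIndicator S) (normalizedIndicator T) = 0 := by
  refine sum_eq_zero fun i _ => ?_
  by_cases hiS : i ∈ S
  · simp [hiS, disjoint_left.mp h hiS]
  · simp [hiS]

theorem sum_sq_apply_smul_normalizedIndicator_add {S : Finset ι} (hS : S.Nonempty) (a b : ℝ) :
    ∑ i ∈ S, (a • normalizedIndicator S + b • normalizedIndicator Sᶜ) i ^ 2 = a ^ 2 :=
  calc ∑ i ∈ S, (a • normalizedIndicator S + b • normalizedIndicator Sᶜ) i ^ 2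
      = ∑ i ∈ S, a ^ 2 * normalizedIndicator S i ^ 2 :=
        sum_congr rfl fun i hi => by simp [hi, mul_pow]
    _ = a ^ 2 := by rw [← mul_sum, sum_sq_normalizedIndicator_apply hS, mul_one]

variable {M : Finset ι}

theorem apply_normalizedIndicator_compl {O : EuclideanSpace ℝ ι → EuclideanSpace ℝ ι}
    (hO : ∀ x i, O x i = if i ∈ M then -x i else x i) :
    O (normalizedIndicator Mᶜ) = normalizedIndicator Mᶜ := by
  ext i
  by_cases hi : i ∈ M <;> simp [hO, hi]

theorem eq_sin_smul_add_cos_smul_of_uniform (hM : M.Nonempty) (hMc : Mᶜ.Nonempty)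
    {u : EuclideanSpace ℝ ι} (hu : ∀ i, u i = 1 / √(Fintype.card ι)) :
    u = sin (arcsin √(#M / Fintype.card ι)) • normalizedIndicator M +
      cos (arcsin √(#M / Fintype.card ι)) • normalizedIndicator Mᶜ := by
  have := hM.to_type
  rw [sin_arcsin_sqrt_card_div, cos_arcsin_sqrt_card_div]
  ext i
  by_cases hi : i ∈ M
  · have : √(#M : ℝ) ≠ 0 := by positivity
    simp only [hu, PiLp.add_apply, PiLp.smul_apply, normalizedIndicator_apply, hi, mem_compl,
      if_true, not_true_eq_false, if_false, smul_eq_mul, mul_zero, add_zero]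
    field_simp
  · have : √(#Mᶜ : ℝ) ≠ 0 := by positivity
    simp only [hu, PiLp.add_apply, PiLp.smul_apply, normalizedIndicator_apply, hi, mem_compl,
      if_false, not_false_eq_true, if_true, smul_eq_mul, mul_zero, zero_add]
    field_simp

end NormalizedIndicator

end Grover

open Grover

theorem grover_success_probability_general
    (N : ℕ) (M : Finset (Fin N)) (hM : M.Nonempty) (hMN : M.card < N)
    (u : EuclideanSpace ℝ (Fin N))
    (hu : ∀ i, u i = 1 / Real.sqrt N)
    (θ : ℝ) (hθ : θ = Real.arcsin (Real.sqrt (M.card / N)))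
    (O D : EuclideanSpace ℝ (Fin N) →ₗ[ℝ] EuclideanSpace ℝ (Fin N))
    (hO : ∀ x, ∀ i, O x i = if i ∈ M then -x i else x i)
    (hD : ∀ x, D x = (2 * (inner ℝ u x : ℝ)) • u - x) :
    ∀ k : ℕ, ∑ i ∈ M, ((⇑D ∘ ⇑O)^[k] u i) ^ 2 =
      Real.sin ((2 * k + 1) * θ) ^ 2 := by
  intro k
  have hMc : Mᶜ.Nonempty := card_pos.mp (by rw [card_compl, Fintype.card_fin]; omega)
  have hu' := eq_sin_smul_add_cos_smul_of_uniform hM hMc (u := u) (by simpa using hu)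
  rw [Fintype.card_fin, ← hθ] at hu'
  rw [iterate_diffusion_oracle_apply (norm_normalizedIndicator hM) (norm_normalizedIndicator hMc)
    (inner_normalizedIndicator_of_disjoint disjoint_compl_right) hu'
    (apply_normalizedIndicator_eq_neg hO) (apply_normalizedIndicator_compl hO) hD k,
    sum_sq_apply_smul_normalizedIndicator_add hM]

/-- The probability that a measurement of the state `G^k u` yields a marked
element equals `sin²((2k+1)θ)`. -/
theorem grover_success_probability
    (N : ℕ) (hN : 0 < N) (M : Finset (Fin N)) (hM : M.Nonempty) (hMN : M.card < N)
    (u : EuclideanSpace ℝ (Fin N))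
    (hu : ∀ i, u i = 1 / Real.sqrt N)
    (θ : ℝ) (hθ : θ = Real.arcsin (Real.sqrt (M.card / N)))
    (O D : EuclideanSpace ℝ (Fin N) →ₗ[ℝ] EuclideanSpace ℝ (Fin N))
    (hO : ∀ x, ∀ i, O x i = if i ∈ M then -x i else x i)
    (hD : ∀ x, D x = (2 * (inner ℝ u x : ℝ)) • u - x) :
    ∀ k : ℕ, ∑ i ∈ M, ((⇑D ∘ ⇑O)^[k] u i) ^ 2 =
      Real.sin ((2 * k + 1) * θ) ^ 2 :=
  grover_success_probability_general N M hM hMN u hu θ hθ O D hO hD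
end

section
/- Let θ be a real number with 0 < θ ≤ π/2 and let k = ⌊π/(4θ)⌋. Then cos²((2k+1)θ) ≤ sin²(θ); equivalently, sin²((2k+1)θ) ≥ 1 − sin²(θ). (This is the angle estimate showing that after ⌊π/(4θ)⌋ Grover rotations the failure probability is at most sin²θ.) -/
open Real

/-- Angle estimate: with `k = ⌊π/(4θ)⌋` Grover rotations, the failure
probability `cos²((2k+1)θ)` is at most `sin²θ`. -/
theorem grover_angle_estimate
    (θ : ℝ) (hθ₀ : 0 < θ) (hθ₁ : θ ≤ Real.pi / 2)
    (k : ℕ) (hk : k = ⌊Real.pi / (4 * θ)⌋₊) :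
    Real.cos ((2 * k + 1) * θ) ^ 2 ≤ Real.sin θ ^ 2 ∧
      Real.sin ((2 * k + 1) * θ) ^ 2 ≥ 1 - Real.sin θ ^ 2 := by
  have hπ := Real.pi_pos
  have h4θ : 0 < 4 * θ := by linarith
  have hkle : (k : ℝ) ≤ Real.pi / (4 * θ) := by
    rw [hk]; exact Nat.floor_le (by positivity)
  have hklt : Real.pi / (4 * θ) < (k : ℝ) + 1 := by
    rw [hk]; exact Nat.lt_floor_add_one _
  have h1 : (k : ℝ) * (4 * θ) ≤ Real.pi := (le_div_iff₀ h4θ).mp hkle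
  have h2 : Real.pi < ((k : ℝ) + 1) * (4 * θ) := (div_lt_iff₀ h4θ).mp hklt
  set x : ℝ := Real.pi / 2 - (2 * k + 1) * θ with hx
  have hx1 : -θ ≤ x := by rw [hx]; nlinarith
  have hx2 : x ≤ θ := by rw [hx]; nlinarith
  have hs1 : Real.sin x ≤ Real.sin θ :=
    Real.sin_le_sin_of_le_of_le_pi_div_two (by linarith) hθ₁ hx2
  have hs2 : Real.sin (-θ) ≤ Real.sin x :=
    Real.sin_le_sin_of_le_of_le_pi_div_two (by linarith) (by linarith) hx1
  rw [Real.sin_neg] at hs2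
  have hcos : Real.cos ((2 * k + 1) * θ) ^ 2 ≤ Real.sin θ ^ 2 := by
    rw [← Real.sin_pi_div_two_sub]
    exact sq_le_sq' hs2 hs1
  refine ⟨hcos, ?_⟩
  have := Real.sin_sq_add_cos_sq ((2 * k + 1) * θ)
  linarith
end

section
/- Suppose N ≥ 2 and M = {x₀} is a single marked element, and let θ = arcsin(1/√N) and k = ⌊π/(4θ)⌋. Then k ≤ (π/4)·√N, and the probability of measuring x₀ after k Grover iterations satisfies ((G^k u)_{x₀})² ≥ 1 − 1/N. -/
open Real

/-!
With `sin θ = 1/√N`, the Grover operator acts on vectors that are constant off `x₀` as the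
rotation by `2θ` of the pair (amplitude at `x₀`, `√(N-1)` · common amplitude elsewhere), so
`G^j u` has amplitude `sin ((2j+1)θ)` at `x₀`. For `k = ⌊π/(4θ)⌋` the angle `(2k+1)θ` lies
within `θ` of `π/2`, hence `cos² ((2k+1)θ) ≤ sin² θ = 1/N`; and `θ ≥ sin θ = 1/√N` bounds `k`.
-/

theorem sum_ite_eq_add_sub_one_mul {N : ℕ} (x₀ : Fin N) (a b : ℝ) :
    ∑ i, (if i = x₀ then a else b) = a + (N - 1) * b := by
  rw [Finset.sum_ite, Finset.filter_eq', Finset.filter_ne']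
  simp [Finset.card_erase_of_mem, Nat.cast_sub (Nat.one_le_of_lt x₀.isLt)]

theorem grover_step_apply {N : ℕ} (x₀ : Fin N) (u : EuclideanSpace ℝ (Fin N))
    (hu : ∀ i, u i = 1 / √N)
    (O D : EuclideanSpace ℝ (Fin N) → EuclideanSpace ℝ (Fin N))
    (hO : ∀ x, ∀ i, O x i = if i = x₀ then -x i else x i)
    (hD : ∀ x, D x = (2 * (inner ℝ u x : ℝ)) • u - x)
    {v : EuclideanSpace ℝ (Fin N)} {a b : ℝ} (hv : ∀ i, v i = if i = x₀ then a else b)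
    (i : Fin N) :
    D (O v) i = if i = x₀ then (1 - 2 / N) * a + 2 * (N - 1) / N * b
      else -(2 / N) * a + (1 - 2 / N) * b := by
  have hOv : ∀ j, O v j = if j = x₀ then -a else b := by
    intro j; rw [hO, hv]; split_ifs <;> rfl
  have hinner : inner ℝ u (O v) = (-a + (N - 1) * b) / √N := by
    simp only [PiLp.inner_apply, RCLike.inner_apply, conj_trivial, hu, hOv]
    simp only [← sum_ite_eq_add_sub_one_mul x₀]
    rw [Finset.sum_div]
    congr! 1 with j; split_ifs <;> ring
  have hsq : (√N)⁻¹ ^ 2 = (N : ℝ)⁻¹ := by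
    rw [inv_pow, sq_sqrt (Nat.cast_nonneg N)]
  rw [hD, PiLp.sub_apply, PiLp.smul_apply, smul_eq_mul, hinner, hu, hOv]
  split_ifs
  · linear_combination 2 * (-a + (N - 1) * b) * hsq
  · have hN : (N : ℝ) ≠ 0 := by have := x₀.pos; positivity
    linear_combination 2 * (-a + (N - 1) * b) * hsq + 2 * b * mul_inv_cancel₀ hN

theorem cos_arcsin_one_div_sqrt {x : ℝ} (hx : 1 ≤ x) :
    cos (arcsin (1 / √x)) = √(x - 1) / √x := by
  rw [cos_arcsin, div_pow, one_pow, sq_sqrt (by linarith), ← sqrt_div' _ (by linarith),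
    one_sub_div (by linarith)]

theorem grover_iterate_apply {N : ℕ} (hN : 2 ≤ N) (x₀ : Fin N) (u : EuclideanSpace ℝ (Fin N))
    (hu : ∀ i, u i = 1 / √N)
    (O D : EuclideanSpace ℝ (Fin N) → EuclideanSpace ℝ (Fin N))
    (hO : ∀ x, ∀ i, O x i = if i = x₀ then -x i else x i)
    (hD : ∀ x, D x = (2 * (inner ℝ u x : ℝ)) • u - x)
    {θ : ℝ} (hsin : sin θ = 1 / √N) (hcos : cos θ = √(N - 1) / √N) (j : ℕ) (i : Fin N) :
    (D ∘ O)^[j] u i =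
      if i = x₀ then sin ((2 * j + 1) * θ) else cos ((2 * j + 1) * θ) / √(N - 1) := by
  have hN' : (2 : ℝ) ≤ N := by exact_mod_cast hN
  have ht : √(N - 1 : ℝ) ≠ 0 := (sqrt_pos.2 (by linarith)).ne'
  have hs : √(N : ℝ) ≠ 0 := by positivity
  have ht2 : √(N - 1 : ℝ) ^ 2 = N - 1 := sq_sqrt (by linarith)
  have hs2 : √(N : ℝ) ^ 2 = N := sq_sqrt (by linarith)
  induction j generalizing i with
  | zero =>
    simp only [Function.iterate_zero, id_eq, CharP.cast_eq_zero, mul_zero, zero_add, one_mul,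
      hu, hsin, hcos]
    split_ifs
    · rfl
    · field_simp
  | succ j ih =>
    have hsin2 : sin (2 * θ) = 2 * √(N - 1) / N := by
      rw [sin_two_mul, hsin, hcos]; field_simp; rw [hs2]
    have hcos2 : cos (2 * θ) = 1 - 2 / N := by
      rw [cos_two_mul', hsin, hcos, div_pow, div_pow, ht2, hs2]; field_simp; ring
    rw [Function.iterate_succ_apply', Function.comp_apply, grover_step_apply x₀ u hu O D hO hD ih,
      show (2 * ((j + 1 : ℕ) : ℝ) + 1) * θ = (2 * j + 1) * θ + 2 * θ by push_cast; ring,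
      sin_add, cos_add, hsin2, hcos2]
    split_ifs
    · field_simp
      linear_combination (-2 * cos ((2 * j + 1) * θ)) * ht2
    · field_simp
      ring

theorem cos_sq_two_floor_add_one_mul_le_sin_sq {θ : ℝ} (hθ : 0 < θ) (hθπ : θ ≤ π / 2) :
    cos ((2 * ⌊π / (4 * θ)⌋₊ + 1) * θ) ^ 2 ≤ sin θ ^ 2 := by
  have h4θ : 0 < 4 * θ := by positivity
  have hk_le : (⌊π / (4 * θ)⌋₊ : ℝ) * (4 * θ) ≤ π :=
    (le_div_iff₀ h4θ).1 (Nat.floor_le (by positivity))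
  have hk_lt : π < (⌊π / (4 * θ)⌋₊ + 1 : ℝ) * (4 * θ) :=
    (div_lt_iff₀ h4θ).1 (Nat.lt_floor_add_one _)
  rw [← sin_pi_div_two_sub]
  apply sq_le_sq'
  · rw [← sin_neg]
    apply sin_le_sin_of_le_of_le_pi_div_two <;> linarith [pi_pos]
  · apply sin_le_sin_of_le_of_le_pi_div_two <;> linarith [pi_pos]

theorem floor_pi_div_four_mul_arcsin_le {x : ℝ} (hx : 0 < x) (hx₁ : x ≤ 1) :
    (⌊π / (4 * arcsin x)⌋₊ : ℝ) ≤ π / (4 * x) := by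
  have hx_le : x ≤ arcsin x := by
    simpa only [sin_arcsin (by linarith) hx₁] using sin_le (arcsin_nonneg.2 hx.le)
  calc (⌊π / (4 * arcsin x)⌋₊ : ℝ) ≤ π / (4 * arcsin x) :=
      Nat.floor_le (div_nonneg pi_pos.le (by linarith))
    _ ≤ π / (4 * x) := by gcongr

/-- For a single marked element `x₀` out of `N ≥ 2` elements, with
`θ = arcsin(1/√N)` and `k = ⌊π/(4θ)⌋`, we have `k ≤ (π/4)√N` and the
probability of measuring `x₀` after `k` Grover iterations is at least
`1 - 1/N`. -/
theorem grover_single_marked_element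
    (N : ℕ) (hN : 2 ≤ N) (x₀ : Fin N)
    (u : EuclideanSpace ℝ (Fin N))
    (hu : ∀ i, u i = 1 / Real.sqrt N)
    (θ : ℝ) (hθ : θ = Real.arcsin (1 / Real.sqrt N))
    (O D : EuclideanSpace ℝ (Fin N) →ₗ[ℝ] EuclideanSpace ℝ (Fin N))
    (hO : ∀ x, ∀ i, O x i = if i = x₀ then -x i else x i)
    (hD : ∀ x, D x = (2 * (inner ℝ u x : ℝ)) • u - x)
    (k : ℕ) (hk : k = ⌊Real.pi / (4 * θ)⌋₊) :
    (k : ℝ) ≤ (Real.pi / 4) * Real.sqrt N ∧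
      ((⇑D ∘ ⇑O)^[k] u x₀) ^ 2 ≥ 1 - 1 / N := by
  have hN' : (2 : ℝ) ≤ N := by exact_mod_cast hN
  have hx : 0 < 1 / √(N : ℝ) := by positivity
  have hx₁ : 1 / √(N : ℝ) ≤ 1 := by
    rw [div_le_one (sqrt_pos.2 (by linarith)), one_le_sqrt]; linarith
  have hsin : sin θ = 1 / √N := hθ ▸ sin_arcsin (by linarith) hx₁
  have hcos : cos θ = √(N - 1) / √N := hθ ▸ cos_arcsin_one_div_sqrt (by linarith)
  subst hk
  constructor
  · calc (⌊π / (4 * θ)⌋₊ : ℝ) ≤ π / (4 * (1 / √N)) :=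
          hθ ▸ floor_pi_div_four_mul_arcsin_le hx hx₁
      _ = π / 4 * √N := by field_simp
  · have hcos_sq := cos_sq_two_floor_add_one_mul_le_sin_sq (hθ ▸ arcsin_pos.2 hx)
      (hθ ▸ arcsin_le_pi_div_two _)
    rw [hsin, div_pow, one_pow, sq_sqrt (by linarith)] at hcos_sq
    rw [grover_iterate_apply hN x₀ u hu O D hO hD hsin hcos, if_pos rfl]
    linarith [sin_sq_add_cos_sq ((2 * ⌊π / (4 * θ)⌋₊ + 1) * θ)]
end

section
/- For every real θ with sin(2θ) ≠ 0 and every positive integer m, the average success probability over a uniformly random number of Grover rotations j ∈ {0, 1, …, m−1} satisfies (1/m) ∑_{j=0}^{m−1} sin²((2j+1)θ) = 1/2 − sin(4mθ)/(4m · sin(2θ)). -/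
open Real

/-! Since `sin² y = 1/2 - cos (2y)/2`, it suffices to sum `cos ((2j+1)·2θ)`; multiplying that sum
by `2 sin (2θ)` makes it telescope, because `2 sin x cos ((2j+1)x) = sin (2(j+1)x) - sin (2jx)`. -/

theorem two_mul_sin_mul_sum_cos_odd_mul (x : ℝ) (m : ℕ) :
    2 * sin x * ∑ j ∈ Finset.range m, cos ((2 * j + 1) * x) = sin (2 * m * x) := by
  have step (j : ℕ) :
      2 * sin x * cos ((2 * j + 1) * x) = sin (2 * (j + 1 : ℕ) * x) - sin (2 * j * x) := by
    rw [two_mul_sin_mul_cos, show x - (2 * j + 1) * x = -(2 * j * x) by ring, sin_neg]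
    push_cast
    ring_nf
  rw [Finset.mul_sum]
  simp only [step]
  rw [Finset.sum_range_sub (fun j : ℕ => sin (2 * j * x))]
  simp

theorem sum_sin_sq_odd_mul (θ : ℝ) (hθ : sin (2 * θ) ≠ 0) (m : ℕ) :
    ∑ j ∈ Finset.range m, sin ((2 * j + 1) * θ) ^ 2 =
      m / 2 - sin (4 * m * θ) / (4 * sin (2 * θ)) := by
  have hcos : ∑ j ∈ Finset.range m, cos ((2 * j + 1) * (2 * θ)) =
      sin (4 * m * θ) / (2 * sin (2 * θ)) := by
    rw [eq_div_iff (mul_ne_zero two_ne_zero hθ), mul_comm, two_mul_sin_mul_sum_cos_odd_mul]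
    ring_nf
  calc ∑ j ∈ Finset.range m, sin ((2 * j + 1) * θ) ^ 2
      = ∑ j ∈ Finset.range m, (1 / 2 - cos ((2 * j + 1) * (2 * θ)) / 2) := by
        refine Finset.sum_congr rfl fun j _ => ?_
        rw [sin_sq_eq_half_sub]
        ring_nf
    _ = m / 2 - sin (4 * m * θ) / (4 * sin (2 * θ)) := by
        rw [Finset.sum_sub_distrib, ← Finset.sum_div, ← Finset.sum_div, hcos]
        simp only [Finset.sum_const, Finset.card_range, nsmul_eq_mul]
        field_simp
        ring

/-- Average Grover success probability over a uniformly random number of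
rotations `j ∈ {0, …, m−1}`:
`(1/m) ∑_{j<m} sin²((2j+1)θ) = 1/2 − sin(4mθ)/(4m sin(2θ))`. -/
theorem average_grover_success_probability
    (θ : ℝ) (hθ : Real.sin (2 * θ) ≠ 0) (m : ℕ) (hm : 0 < m) :
    (1 / m : ℝ) * ∑ j ∈ Finset.range m, Real.sin ((2 * j + 1) * θ) ^ 2 =
      1 / 2 - Real.sin (4 * m * θ) / (4 * m * Real.sin (2 * θ)) := by
  have hm' : (m : ℝ) ≠ 0 := by positivity
  rw [sum_sin_sq_odd_mul θ hθ m]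
  field_simp
end

section
/- Let θ ∈ (0, π/2) and let m be a positive integer with m ≥ 1/sin(2θ). Then (1/m) ∑_{j=0}^{m−1} sin²((2j+1)θ) ≥ 1/4; that is, once m reaches the critical value 1/sin(2θ), a uniformly random number of Grover rotations in {0, …, m−1} succeeds with probability at least 1/4. -/
open Real

lemma cos_sum_eq (θ : ℝ) (m : ℕ) :
    (∑ j ∈ Finset.range m, Real.cos ((4 * j + 2) * θ)) * (2 * Real.sin (2 * θ))
      = Real.sin (4 * m * θ) := by
  induction m with
  | zero => simp
  | succ n ih =>
    rw [Finset.sum_range_succ, add_mul, ih]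
    push_cast
    have h1 : (4 * ((n : ℝ) + 1)) * θ = ((4 * n + 2) * θ) + 2 * θ := by ring
    have h2 : (4 * (n : ℝ)) * θ = ((4 * n + 2) * θ) - 2 * θ := by ring
    rw [h1, h2, Real.sin_add, Real.sin_sub]
    ring

/-- Once `m` reaches the critical value `1/sin(2θ)`, a uniformly random number
of Grover rotations in `{0, …, m−1}` succeeds with probability at least `1/4`. -/
theorem average_grover_success_at_least_quarter
    (θ : ℝ) (hθ₀ : 0 < θ) (hθ₁ : θ < Real.pi / 2)
    (m : ℕ) (hm : 0 < m) (hcrit : (m : ℝ) ≥ 1 / Real.sin (2 * θ)) :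
    (1 / m : ℝ) * ∑ j ∈ Finset.range m, Real.sin ((2 * j + 1) * θ) ^ 2 ≥ 1 / 4 := by
  have hs : 0 < Real.sin (2 * θ) := by
    apply Real.sin_pos_of_pos_of_lt_pi (by linarith) (by linarith)
  have hm' : (0 : ℝ) < m := by exact_mod_cast hm
  -- rewrite sin² via cos
  have hsum : ∑ j ∈ Finset.range m, Real.sin ((2 * j + 1) * θ) ^ 2
      = m / 2 - (∑ j ∈ Finset.range m, Real.cos ((4 * j + 2) * θ)) / 2 := by
    have : ∀ j ∈ Finset.range m, Real.sin ((2 * j + 1) * θ) ^ 2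
        = 1 / 2 - Real.cos ((4 * j + 2) * θ) / 2 := by
      intro j _
      have hc := Real.cos_two_mul ((2 * (j : ℝ) + 1) * θ)
      have h3 : 2 * ((2 * (j : ℝ) + 1) * θ) = (4 * j + 2) * θ := by ring
      rw [h3] at hc
      have hpyth := Real.sin_sq_add_cos_sq ((2 * (j : ℝ) + 1) * θ)
      nlinarith [hc, hpyth]
    rw [Finset.sum_congr rfl this, Finset.sum_sub_distrib, Finset.sum_div]
    simp [Finset.sum_div]
    ring
  have hcos := cos_sum_eq θ m
  have hbound : (∑ j ∈ Finset.range m, Real.cos ((4 * j + 2) * θ)) ≤ m / 2 := by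
    have h1 : Real.sin (4 * m * θ) ≤ 1 := Real.sin_le_one _
    have hms : 1 ≤ (m : ℝ) * Real.sin (2 * θ) := by
      rw [ge_iff_le, div_le_iff₀ hs] at hcrit
      linarith
    have := hcos
    nlinarith [hs]
  rw [ge_iff_le, hsum, mul_comm, mul_one_div, le_div_iff₀ hm']
  linarith
end

section
/- Fix a positive integer r, and define q : ℕ → ℚ for t ≥ r by the recurrence q(t) = (1/t)·(1 + ∑_{s=r+1}^{t} q(s−1)) (in particular q(r) = 1/r). Then q(t) = 1/r for every t ≥ r. (In the Dürr–Høyer minimum-finding algorithm applied to a list of t distinct values — where the first threshold index is chosen uniformly at random and each subsequent threshold is chosen uniformly among the values strictly below the current threshold — q(t) is the probability that the element of rank r is ever chosen as a threshold, and it equals 1/r independently of t.) -/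
theorem one_div_mul_one_add_sub_nsmul_one_div {K : Type*} [Field K] [CharZero K] {r t : ℕ}
    (hr : 0 < r) (hrt : r ≤ t) :
    (1 / t : K) * (1 + (t - r) • (1 / r : K)) = 1 / r := by
  have hr0 : (r : K) ≠ 0 := Nat.cast_ne_zero.mpr hr.ne'
  have ht0 : (t : K) ≠ 0 := Nat.cast_ne_zero.mpr (hr.trans_le hrt).ne'
  rw [nsmul_eq_mul, Nat.cast_sub hrt]
  field_simp
  ring

/-- In the Dürr–Høyer minimum-finding algorithm on a list of `t` distinct
values, the probability `q t` that the element of rank `r` is ever chosen as a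
threshold satisfies the recurrence `q t = (1/t)(1 + ∑_{s=r+1}^{t} q (s−1))`
for `t ≥ r`, and equals `1/r` independently of `t`. -/
theorem durr_hoyer_rank_probability
    (r : ℕ) (hr : 0 < r) (q : ℕ → ℚ)
    (hq : ∀ t, r ≤ t →
      q t = (1 / t) * (1 + ∑ s ∈ Finset.Icc (r + 1) t, q (s - 1))) :
    ∀ t, r ≤ t → q t = 1 / r := by
  intro t
  induction t using Nat.strong_induction_on with
  | _ t ih =>
    intro hrt
    have hsum : ∑ s ∈ Finset.Icc (r + 1) t, q (s - 1) =
        ∑ _s ∈ Finset.Icc (r + 1) t, (1 / r : ℚ) :=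
      Finset.sum_congr rfl fun s hs => by
        obtain ⟨hrs, hst⟩ := Finset.mem_Icc.mp hs
        exact ih (s - 1) (by omega) (by omega)
    rw [hq t hrt, hsum, Finset.sum_const, Nat.card_Icc, Nat.add_sub_add_right]
    exact one_div_mul_one_add_sub_nsmul_one_div hr hrt
end
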